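/- arXiv:0912.0287 — 3 statements merged into one kernel-verified Lean document; each statement's English description precedes it below -/
import Mathlib

section
/- For integers m > b ≥ k > l ≥ 0 with k − l ≥ 2 and b ≥ k, the strict inequality C(b,l)/C(m,l) + C(b,k)/C(m,k) > C(b,l+1)/C(m,l+1) + C(b,k−1)/C(m,k−1) holds, where C(·,·) denotes binomial coefficients. -/
private lemma ratio_succ (b m j : ℕ) (hjb : j ≤ b) (hjm : j + 1 ≤ m) :
    ((b.choose (j+1)) : ℝ) / (m.choose (j+1))
      = ((b.choose j) : ℝ) / (m.choose j) * (((b:ℝ) - j) / ((m:ℝ) - j)) := by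
  have h1 : (b.choose (j+1) : ℝ) * (j+1) = (b.choose j : ℝ) * ((b:ℝ) - j) := by
    have := Nat.choose_succ_right_eq b j
    have h := congrArg (Nat.cast : ℕ → ℝ) this
    push_cast [Nat.cast_sub hjb] at h
    linarith [h]
  have h2 : (m.choose (j+1) : ℝ) * (j+1) = (m.choose j : ℝ) * ((m:ℝ) - j) := by
    have := Nat.choose_succ_right_eq m j
    have h := congrArg (Nat.cast : ℕ → ℝ) this
    push_cast [Nat.cast_sub (by omega : j ≤ m)] at h
    linarith [h]
  have hc0 : (0:ℝ) < m.choose j := by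
    exact_mod_cast Nat.choose_pos (by omega : j ≤ m)
  have hc1 : (0:ℝ) < m.choose (j+1) := by
    exact_mod_cast Nat.choose_pos hjm
  have hM : (0:ℝ) < (m:ℝ) - j := by
    have : (j:ℝ) < m := by exact_mod_cast (by omega : j < m)
    linarith
  have hj1 : (0:ℝ) < (j:ℝ) + 1 := by positivity
  field_simp
  nlinarith [h1, h2, mul_pos hc0 hc1]

private lemma step (b m j : ℕ) (hj : j + 1 ≤ b) (hm : b + 1 < m) :
    ((b.choose (j+1)):ℝ)/(m.choose (j+1)) - (b.choose (j+2))/(m.choose (j+2))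
      < ((b.choose j):ℝ)/(m.choose j) - (b.choose (j+1))/(m.choose (j+1)) := by
  have e1 := ratio_succ b m j (by omega) (by omega)
  have e2 := ratio_succ b m (j+1) (by omega) (by omega)
  have hx : (0:ℝ) < ((b.choose j):ℝ)/(m.choose j) := by
    have h1 : (0:ℝ) < b.choose j := by exact_mod_cast Nat.choose_pos (by omega : j ≤ b)
    have h2 : (0:ℝ) < m.choose j := by exact_mod_cast Nat.choose_pos (by omega : j ≤ m)
    positivity
  set x := ((b.choose j):ℝ)/(m.choose j) with hxdef
  have hB : (1:ℝ) ≤ (b:ℝ) - j := by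
    have : (j+1:ℝ) ≤ b := by exact_mod_cast hj
    linarith
  have hM : (b:ℝ) - j + 2 ≤ (m:ℝ) - j := by
    have : (b+2:ℝ) ≤ m := by exact_mod_cast (by omega : b + 2 ≤ m)
    linarith
  rw [e2, e1]
  push_cast
  set B := (b:ℝ) - j with hBdef
  set M := (m:ℝ) - j with hMdef
  have hB1 : ((b:ℝ) - (j+1)) = B - 1 := by rw [hBdef]; ring
  have hM1 : ((m:ℝ) - (j+1)) = M - 1 := by rw [hMdef]; ring
  rw [hB1, hM1]
  have hM0 : (0:ℝ) < M := by linarith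
  have hM10 : (0:ℝ) < M - 1 := by linarith
  have key : (0:ℝ) < x * ((M - B) * (M - B - 1)) := by
    apply mul_pos hx; apply mul_pos <;> linarith
  have hBM : x * (B / M) - x * (B / M) * ((B - 1) / (M - 1))
      = x * (B * (M - B)) / (M * (M - 1)) := by
    field_simp; ring
  have hRHS : x - x * (B / M) = x * (M - B) / M := by
    field_simp
  rw [hBM, hRHS, div_lt_div_iff₀ (by positivity) hM0]
  nlinarith [key, mul_pos hM0 hM10]

private lemma chain (b m : ℕ) (hm : b + 1 < m) :
    ∀ d j : ℕ, 1 ≤ d → j + d ≤ b →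
    ((b.choose (j+d)):ℝ)/(m.choose (j+d)) - (b.choose (j+d+1))/(m.choose (j+d+1))
      < ((b.choose j):ℝ)/(m.choose j) - (b.choose (j+1))/(m.choose (j+1)) := by
  intro d
  induction d with
  | zero => intro j h; omega
  | succ n ih =>
    intro j _ hjb
    rcases Nat.eq_zero_or_pos n with hn | hn
    · subst hn
      simpa using step b m j (by omega) hm
    · have h1 := ih j hn (by omega)
      have h2 := step b m (j + n) (by omega) hm
      have e : j + (n+1) = j + n + 1 := by omega
      rw [e]
      calc _ < ((b.choose (j+n)):ℝ)/(m.choose (j+n)) - (b.choose (j+n+1))/(m.choose (j+n+1)) := by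
              convert h2 using 3 <;> omega
        _ < _ := h1

/-- For integers 0 ≤ l, l + 2 ≤ k ≤ b and b < m − 1, the strict inequality
C(b,l)/C(m,l) + C(b,k)/C(m,k) > C(b,l+1)/C(m,l+1) + C(b,k−1)/C(m,k−1) holds. -/
theorem binom_ratio_strict_ineq (l k b m : ℕ) (hlk : l + 2 ≤ k) (hkb : k ≤ b)
    (hbm : b + 1 < m) :
    ((b.choose (l + 1)) : ℝ) / (m.choose (l + 1)) + (b.choose (k - 1)) / (m.choose (k - 1))
      < ((b.choose l) : ℝ) / (m.choose l) + (b.choose k) / (m.choose k) := by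
  obtain ⟨d, hd, hd1⟩ : ∃ d, 1 ≤ d ∧ k = l + d + 1 := ⟨k - 1 - l, by omega, by omega⟩
  have h := chain b m hbm d l hd (by omega)
  have e1 : k - 1 = l + d := by omega
  have e2 : k = l + d + 1 := hd1
  rw [e1, e2]
  linarith
end

section
/- For k ≥ 2, the function P_k(z) = z p_k'(z) / p_k(z), where p_k(z) = ((1+z)^k + (1−z)^k)/2, is strictly increasing on (0,∞), satisfies lim_{z→0⁺} P_k(z) = 0, and lim_{z→∞} P_k(z) = k if k is even and k−1 if k is odd. -/
open Filter Topology Finset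

private lemma Pk_aux_nonneg {x y d : ℝ} (hx : 0 ≤ x) (hy : 0 ≤ y) (hxy : x * y = d ^ 2) :
    0 ≤ x + y + 2 * d := by
  nlinarith [sq_nonneg (x - y), sq_nonneg (x + y + 2 * d), sq_nonneg (x + y)]

private lemma Pk_aux_pos {x y d : ℝ} (hx : 0 ≤ x) (hlt : x < y) (hxy : x * y = d ^ 2) :
    0 < x + y + 2 * d := by
  nlinarith [mul_pos (sub_pos.2 hlt) (sub_pos.2 hlt), sq_nonneg (x + y + 2 * d)]

private lemma Pk_sum_pos (n : ℕ) {z : ℝ} (hz : 0 < z) :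
    0 < (∑ i ∈ range (n+1), ((1+z)^2)^i * ((1-z)^2)^(n-i)) + ((n:ℝ)+1) * ((1+z)*(1-z))^n := by
  have hA : (0:ℝ) < (1+z)^2 := by positivity
  have hB : (0:ℝ) ≤ (1-z)^2 := sq_nonneg _
  have hBA : ((1-z):ℝ)^2 < (1+z)^2 := by nlinarith
  have hprod : ∀ i : ℕ, i ≤ n →
      (((1+z)^2)^i * ((1-z)^2)^(n-i)) * (((1+z)^2)^(n-i) * ((1-z)^2)^i)
        = (((1+z)*(1-z))^n)^2 := by
    intro i hi
    have h1 : ((1+z):ℝ)^2 * (1-z)^2 = (((1+z)*(1-z)))^2 := by ring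
    calc (((1+z)^2)^i * ((1-z)^2)^(n-i)) * (((1+z)^2)^(n-i) * ((1-z)^2)^i)
        = (((1+z)^2)^i * ((1+z)^2)^(n-i)) * (((1-z)^2)^(n-i) * ((1-z)^2)^i) := by ring
      _ = ((1+z)^2)^n * ((1-z)^2)^n := by
            rw [← pow_add, ← pow_add]
            congr 2 <;> omega
      _ = (((1+z)^2) * ((1-z)^2))^n := (mul_pow _ _ n).symm
      _ = ((((1+z)*(1-z)))^2)^n := by rw [h1]
      _ = (((1+z)*(1-z))^n)^2 := by rw [← pow_mul, ← pow_mul, Nat.mul_comm]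
  have key : 0 < ∑ i ∈ range (n+1),
      (((1+z)^2)^i * ((1-z)^2)^(n-i) + ((1+z)^2)^(n-i) * ((1-z)^2)^i + 2 * ((1+z)*(1-z))^n) := by
    apply Finset.sum_pos'
    · intro i hi
      have hi' : i ≤ n := Nat.lt_succ_iff.mp (Finset.mem_range.mp hi)
      exact Pk_aux_nonneg (by positivity) (by positivity) (hprod i hi')
    · refine ⟨0, Finset.mem_range.mpr (Nat.succ_pos n), ?_⟩
      rcases Nat.eq_zero_or_pos n with rfl | hn
      · norm_num
      · have h0 := hprod 0 (Nat.zero_le n)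
        simp only [pow_zero, one_mul, mul_one, Nat.sub_zero] at h0 ⊢
        have hlt : (((1-z):ℝ)^2)^n < ((1+z)^2)^n :=
          pow_lt_pow_left₀ hBA hB (by omega)
        exact Pk_aux_pos (by positivity) hlt (by linear_combination h0)
  have hrefl : ∑ i ∈ range (n+1), ((1+z)^2)^(n-i) * ((1-z)^2)^i
      = ∑ i ∈ range (n+1), ((1+z)^2)^i * ((1-z)^2)^(n-i) := by
    rw [← Finset.sum_range_reflect]
    apply Finset.sum_congr rfl
    intro i hi
    have hi' : i ≤ n := Nat.lt_succ_iff.mp (Finset.mem_range.mp hi)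
    congr 2 <;> omega
  rw [Finset.sum_add_distrib, Finset.sum_add_distrib, hrefl, Finset.sum_const,
    Finset.card_range, nsmul_eq_mul] at key
  push_cast at key ⊢
  linarith

private lemma Pk_num_pos (n : ℕ) {z : ℝ} (hz : 0 < z) :
    0 < (((n:ℝ)+2)*((1+z)^(n+1) - (1-z)^(n+1))/2
          + z * (((n:ℝ)+2)*((n:ℝ)+1)*((1+z)^n + (1-z)^n)/2)) * (((1+z)^(n+2) + (1-z)^(n+2))/2)
        - z * (((n:ℝ)+2)*((1+z)^(n+1) - (1-z)^(n+1))/2) * (((n:ℝ)+2)*((1+z)^(n+1) - (1-z)^(n+1))/2) := by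
  have hS := geom_sum₂_mul ((1+z)^2) ((1-z)^2) (n+1)
  have e3 : ∀ (w:ℝ), (w^2)^(n+1) = (w^n)^2 * w^2 := fun w => by
    calc (w^2)^(n+1) = w^(2*(n+1)) := (pow_mul w 2 (n+1)).symm
      _ = w^(n*2+2) := by congr 1; omega
      _ = (w^n)^2 * w^2 := by rw [pow_add, pow_mul]
  rw [e3, e3] at hS
  simp only [Nat.add_sub_cancel] at hS
  have hiden : (((n:ℝ)+2)*((1+z)^(n+1) - (1-z)^(n+1))/2
          + z * (((n:ℝ)+2)*((n:ℝ)+1)*((1+z)^n + (1-z)^n)/2)) * (((1+z)^(n+2) + (1-z)^(n+2))/2)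
        - z * (((n:ℝ)+2)*((1+z)^(n+1) - (1-z)^(n+1))/2) * (((n:ℝ)+2)*((1+z)^(n+1) - (1-z)^(n+1))/2)
      = ((n:ℝ)+2)*z*((∑ i ∈ range (n+1), ((1+z)^2)^i * ((1-z)^2)^(n-i))
          + ((n:ℝ)+1)*((1+z)*(1-z))^n) := by
    rw [mul_pow]
    linear_combination (-((n:ℝ)+2)/4) * hS
  rw [hiden]
  have := Pk_sum_pos n hz
  positivity

private lemma Pk_p_deriv (n : ℕ) (z : ℝ) :
    HasDerivAt (fun z : ℝ => ((1+z)^(n+2) + (1-z)^(n+2))/2)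
      (((n:ℝ)+2)*((1+z)^(n+1) - (1-z)^(n+1))/2) z := by
  have h1 : HasDerivAt (fun z : ℝ => (1+z)^(n+2))
      ((((n:ℕ)+2 : ℕ):ℝ)*(1+z)^(n+2-1)*1) z := ((hasDerivAt_id z).const_add 1).pow (n+2)
  have h2 : HasDerivAt (fun z : ℝ => (1-z)^(n+2))
      ((((n:ℕ)+2 : ℕ):ℝ)*(1-z)^(n+2-1)*(-1)) z := ((hasDerivAt_id z).const_sub 1).pow (n+2)
  refine ((h1.add h2).div_const 2).congr_deriv ?_
  rw [show n+2-1 = n+1 from rfl]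
  push_cast
  ring

private lemma Pk_q_deriv (n : ℕ) (z : ℝ) :
    HasDerivAt (fun z : ℝ => ((n:ℝ)+2)*((1+z)^(n+1) - (1-z)^(n+1))/2)
      (((n:ℝ)+2)*((n:ℝ)+1)*((1+z)^n + (1-z)^n)/2) z := by
  have h1 : HasDerivAt (fun z : ℝ => (1+z)^(n+1))
      ((((n:ℕ)+1 : ℕ):ℝ)*(1+z)^(n+1-1)*1) z := ((hasDerivAt_id z).const_add 1).pow (n+1)
  have h2 : HasDerivAt (fun z : ℝ => (1-z)^(n+1))
      ((((n:ℕ)+1 : ℕ):ℝ)*(1-z)^(n+1-1)*(-1)) z := ((hasDerivAt_id z).const_sub 1).pow (n+1)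
  refine (((h1.sub h2).const_mul ((n:ℝ)+2)).div_const 2).congr_deriv ?_
  rw [show n+1-1 = n from rfl]
  push_cast
  ring

private lemma Pk_p_pos (n : ℕ) {z : ℝ} (hz : 0 < z) :
    0 < ((1+z)^(n+2) + (1-z)^(n+2))/2 := by
  have h1 : |1 - z| < 1 + z := by rw [abs_lt]; constructor <;> linarith
  have h2 : |(1-z)^(n+2)| < (1+z)^(n+2) := by
    rw [abs_pow]; exact pow_lt_pow_left₀ h1 (abs_nonneg _) (by omega)
  have h3 := neg_abs_le ((1-z)^(n+2))
  have h4 := le_abs_self ((1-z)^(n+2))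
  linarith

/-- sums used for the odd-k limit -/
private def PkS (m : ℕ) : ℝ → ℝ := fun w => ∑ i ∈ Finset.range m, (1+w)^i * (1-w)^(m-1-i)

private lemma PkS_cont (m : ℕ) : Continuous (PkS m) := by
  apply continuous_finset_sum
  intro i _
  fun_prop

private lemma PkS_zero (m : ℕ) : PkS m 0 = m := by
  simp [PkS]

private lemma PkS_mul (m : ℕ) (w : ℝ) :
    PkS m w * (2*w) = (1+w)^m - (1-w)^m := by
  have h := geom_sum₂_mul (1+w) (1-w) m
  rw [show (1+w) - (1-w) = 2*w by ring] at h
  exact h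

/-- For k ≥ 2, the function P_k(z) = z p_k'(z)/p_k(z), where
p_k(z) = ((1+z)^k + (1−z)^k)/2, is strictly increasing on (0,∞), tends to 0 as
z → 0⁺, and tends to k (k even) resp. k−1 (k odd) as z → ∞. -/
theorem Pk_strictMono_and_limits (k : ℕ) (hk : 2 ≤ k) :
    let p : ℝ → ℝ := fun z => ((1 + z) ^ k + (1 - z) ^ k) / 2
    let P : ℝ → ℝ := fun z => z * deriv p z / p z
    StrictMonoOn P (Set.Ioi 0) ∧ Tendsto P (𝓝[>] 0) (𝓝 0) ∧
      Tendsto P atTop (𝓝 (if Even k then (k : ℝ) else (k : ℝ) - 1)) := by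
  intro p P
  obtain ⟨n, rfl⟩ : ∃ n, k = n + 2 := ⟨k - 2, by omega⟩
  have hp_def : p = fun z => ((1+z)^(n+2) + (1-z)^(n+2))/2 := rfl
  have hderiv : deriv p = fun z => ((n:ℝ)+2)*((1+z)^(n+1) - (1-z)^(n+1))/2 := by
    rw [hp_def]
    exact funext fun z => (Pk_p_deriv n z).deriv
  have hP_def : P = fun z => z * (((n:ℝ)+2)*((1+z)^(n+1) - (1-z)^(n+1))/2)
      / (((1+z)^(n+2) + (1-z)^(n+2))/2) := by
    funext z
    show z * deriv p z / p z = _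
    rw [hderiv, hp_def]
  rw [hP_def]
  set F : ℝ → ℝ := fun z => z * (((n:ℝ)+2)*((1+z)^(n+1) - (1-z)^(n+1))/2)
      / (((1+z)^(n+2) + (1-z)^(n+2))/2) with hF_def
  have hFderiv : ∀ z ∈ Set.Ioi (0:ℝ), HasDerivAt F
      (((1 * (((n:ℝ)+2)*((1+z)^(n+1) - (1-z)^(n+1))/2)
          + z * (((n:ℝ)+2)*((n:ℝ)+1)*((1+z)^n + (1-z)^n)/2)) * (((1+z)^(n+2) + (1-z)^(n+2))/2)
        - z * (((n:ℝ)+2)*((1+z)^(n+1) - (1-z)^(n+1))/2) * (((n:ℝ)+2)*((1+z)^(n+1) - (1-z)^(n+1))/2))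
        / (((1+z)^(n+2) + (1-z)^(n+2))/2)^2) z := by
    intro z hz
    exact ((hasDerivAt_id z).mul (Pk_q_deriv n z)).div (Pk_p_deriv n z) (Pk_p_pos n hz).ne'
  refine ⟨?_, ?_, ?_⟩
  · -- strict monotonicity
    apply strictMonoOn_of_deriv_pos (convex_Ioi 0)
    · intro z hz
      exact ((hFderiv z hz).differentiableAt.continuousAt).continuousWithinAt
    · intro z hz
      rw [interior_Ioi] at hz
      rw [(hFderiv z hz).deriv]
      apply div_pos
      · have := Pk_num_pos n hz
        linarith [Pk_num_pos n hz]
      · have := Pk_p_pos n hz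
        positivity
  · -- limit at 0⁺
    have hc : ContinuousAt F 0 := by
      apply ContinuousAt.div
      · fun_prop
      · fun_prop
      · norm_num
    have h2 := hc.tendsto
    have hval : F 0 = 0 := by
      rw [hF_def]
      norm_num
    rw [hval] at h2
    exact h2.mono_left nhdsWithin_le_nhds
  · -- limit at ∞
    rcases Nat.even_or_odd (n+2) with hke | hko
    · -- even case
      rw [if_pos hke]
      have hnodd : Odd (n+1) := by
        obtain ⟨m, hm⟩ := hke
        exact ⟨m-1, by omega⟩
      set G : ℝ → ℝ := fun w => ((n:ℝ)+2)*((1+w)^(n+1) + (1-w)^(n+1))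
          / ((1+w)^(n+2) + (1-w)^(n+2)) with hG_def
      have hGc : ContinuousAt G 0 := by
        apply ContinuousAt.div
        · fun_prop
        · fun_prop
        · norm_num
      have hG0 : G 0 = (n:ℝ)+2 := by
        rw [hG_def]
        norm_num
      have h1 : Tendsto (fun z => G z⁻¹) atTop (𝓝 ((n:ℝ)+2)) := by
        rw [← hG0]
        exact hGc.tendsto.comp tendsto_inv_atTop_zero
      have hcast : (((n+2:ℕ)):ℝ) = (n:ℝ)+2 := by push_cast; ring
      rw [hcast]
      apply h1.congr'
      filter_upwards [eventually_gt_atTop (0:ℝ)] with z hz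
      have hz0 : z ≠ 0 := hz.ne'
      have hx : (1+z⁻¹)*z = 1+z := by
        rw [add_mul, one_mul, inv_mul_cancel₀ hz0]; ring
      have hy : (1-z⁻¹)*z = -(1-z) := by
        rw [sub_mul, one_mul, inv_mul_cancel₀ hz0]; ring
      have e1 : (1+z⁻¹)^(n+2)*z^(n+2) = (1+z)^(n+2) := by rw [← mul_pow, hx]
      have e2 : (1-z⁻¹)^(n+2)*z^(n+2) = (1-z)^(n+2) := by
        rw [← mul_pow, hy, hke.neg_pow]
      have e3 : (1+z⁻¹)^(n+1)*z^(n+1) = (1+z)^(n+1) := by rw [← mul_pow, hx]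
      have e4 : (1-z⁻¹)^(n+1)*z^(n+1) = -((1-z)^(n+1)) := by
        rw [← mul_pow, hy, hnodd.neg_pow]
      have hppos := Pk_p_pos n hz
      have hD : 0 < (1+z⁻¹)^(n+2) + (1-z⁻¹)^(n+2) := by
        have hDz : ((1+z⁻¹)^(n+2) + (1-z⁻¹)^(n+2)) * z^(n+2)
            = 2 * (((1+z)^(n+2) + (1-z)^(n+2))/2) := by
          linear_combination e1 + e2
        nlinarith [pow_pos hz (n+2)]
      show G z⁻¹ = F z
      rw [hG_def, hF_def]
      simp only
      rw [div_eq_div_iff hD.ne' hppos.ne']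
      have hmul : (((n:ℝ)+2)*((1+z⁻¹)^(n+1) + (1-z⁻¹)^(n+1)) * (((1+z)^(n+2) + (1-z)^(n+2))/2)) * z^(n+2)
          = (z * (((n:ℝ)+2)*((1+z)^(n+1) - (1-z)^(n+1))/2) * ((1+z⁻¹)^(n+2) + (1-z⁻¹)^(n+2))) * z^(n+2) := by
        linear_combination (((n:ℝ)+2) * (((1+z)^(n+2) + (1-z)^(n+2))/2) * z) * e3
          + (((n:ℝ)+2) * (((1+z)^(n+2) + (1-z)^(n+2))/2) * z) * e4
          - (z * (((n:ℝ)+2)*((1+z)^(n+1) - (1-z)^(n+1))/2)) * e1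
          - (z * (((n:ℝ)+2)*((1+z)^(n+1) - (1-z)^(n+1))/2)) * e2
      exact mul_right_cancel₀ (pow_ne_zero _ hz0) hmul
    · -- odd case
      rw [if_neg (by simpa using (Nat.not_even_iff_odd.mpr hko))]
      have hneven : Even (n+1) := by
        obtain ⟨m, hm⟩ := hko
        exact ⟨m, by omega⟩
      have hcast : (((n+2:ℕ)):ℝ) - 1 = (n:ℝ)+1 := by push_cast; ring
      rw [hcast]
      have hc : ContinuousAt (fun w => ((n:ℝ)+2) * PkS (n+1) w / PkS (n+2) w) 0 := by
        apply ContinuousAt.div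
        · exact (continuous_const.mul (PkS_cont (n+1))).continuousAt
        · exact (PkS_cont (n+2)).continuousAt
        · rw [PkS_zero]
          positivity
      have hval : ((n:ℝ)+2) * PkS (n+1) 0 / PkS (n+2) 0 = (n:ℝ)+1 := by
        rw [PkS_zero, PkS_zero]
        push_cast
        rw [mul_comm, mul_div_assoc, div_self (by positivity : ((n:ℝ)+2) ≠ 0), mul_one]
      have h1 : Tendsto (fun z => ((n:ℝ)+2) * PkS (n+1) z⁻¹ / PkS (n+2) z⁻¹) atTop (𝓝 ((n:ℝ)+1)) := by
        rw [← hval]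
        exact hc.tendsto.comp tendsto_inv_atTop_zero
      apply h1.congr'
      filter_upwards [eventually_gt_atTop (0:ℝ)] with z hz
      have hz0 : z ≠ 0 := hz.ne'
      have hx : (1+z⁻¹)*z = 1+z := by
        rw [add_mul, one_mul, inv_mul_cancel₀ hz0]; ring
      have hy : (1-z⁻¹)*z = -(1-z) := by
        rw [sub_mul, one_mul, inv_mul_cancel₀ hz0]; ring
      have e1 : (1+z⁻¹)^(n+2)*z^(n+2) = (1+z)^(n+2) := by rw [← mul_pow, hx]
      have e2 : (1-z⁻¹)^(n+2)*z^(n+2) = -((1-z)^(n+2)) := by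
        rw [← mul_pow, hy, hko.neg_pow]
      have e3 : (1+z⁻¹)^(n+1)*z^(n+1) = (1+z)^(n+1) := by rw [← mul_pow, hx]
      have e4 : (1-z⁻¹)^(n+1)*z^(n+1) = (1-z)^(n+1) := by
        rw [← mul_pow, hy, hneven.neg_pow]
      have hzz1 : z⁻¹ * z^(n+2) = z^(n+1) := by
        rw [pow_succ, mul_comm (z^(n+1)) z, ← mul_assoc, inv_mul_cancel₀ hz0, one_mul]
      have hzz2 : z⁻¹ * z^(n+1) = z^n := by
        rw [pow_succ, mul_comm (z^n) z, ← mul_assoc, inv_mul_cancel₀ hz0, one_mul]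
      have hG2 : PkS (n+2) z⁻¹ * (2*z^(n+1)) = (1+z)^(n+2) + (1-z)^(n+2) := by
        calc PkS (n+2) z⁻¹ * (2*z^(n+1))
            = (PkS (n+2) z⁻¹ * (2*z⁻¹)) * z^(n+2) := by
              linear_combination (-2 * PkS (n+2) z⁻¹) * hzz1
          _ = ((1+z⁻¹)^(n+2) - (1-z⁻¹)^(n+2)) * z^(n+2) := by rw [PkS_mul]
          _ = (1+z)^(n+2) + (1-z)^(n+2) := by linear_combination e1 - e2
      have hG1 : PkS (n+1) z⁻¹ * (2*z^n) = (1+z)^(n+1) - (1-z)^(n+1) := by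
        calc PkS (n+1) z⁻¹ * (2*z^n)
            = (PkS (n+1) z⁻¹ * (2*z⁻¹)) * z^(n+1) := by
              linear_combination (-2 * PkS (n+1) z⁻¹) * hzz2
          _ = ((1+z⁻¹)^(n+1) - (1-z⁻¹)^(n+1)) * z^(n+1) := by rw [PkS_mul]
          _ = (1+z)^(n+1) - (1-z)^(n+1) := by linear_combination e3 - e4
      have hppos := Pk_p_pos n hz
      have hS2pos : 0 < PkS (n+2) z⁻¹ := by
        nlinarith [pow_pos hz (n+1), hG2, hppos]
      show ((n:ℝ)+2) * PkS (n+1) z⁻¹ / PkS (n+2) z⁻¹ = F z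
      rw [hF_def]
      simp only
      rw [eq_comm, div_eq_div_iff hppos.ne' hS2pos.ne']
      linear_combination (-(z*((n:ℝ)+2)* PkS (n+2) z⁻¹/2))*hG1
        + (((n:ℝ)+2)* PkS (n+1) z⁻¹/2)*hG2
end

section
/- The function Q(z) = z q'(z) / q(z), where q(z) = e^z − 1 − z, is strictly increasing on (0,∞), with lim_{z→0⁺} Q(z) = 2 and lim_{z→∞} Q(z) = ∞. -/
open Filter Topology

private lemma q_pos {z : ℝ} (hz : 0 < z) : 0 < Real.exp z - 1 - z := by
  have := Real.add_one_lt_exp (ne_of_gt hz)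
  linarith

private lemma key_ineq {z : ℝ} (hz : 0 < z) : z ^ 2 * Real.exp z < (Real.exp z - 1) ^ 2 := by
  have h1 : z / 2 < Real.sinh (z / 2) := (Real.self_lt_sinh_iff).2 (by linarith)
  rw [Real.sinh_eq] at h1
  have hpos : 0 < Real.exp (z / 2) := Real.exp_pos _
  have h2 : z * Real.exp (z / 2) < Real.exp z - 1 := by
    have := mul_lt_mul_of_pos_right h1 hpos
    have hz2 : Real.exp (z / 2) * Real.exp (z / 2) = Real.exp z := by
      rw [← Real.exp_add]; ring_nf
    have hneg : Real.exp (-(z / 2)) * Real.exp (z / 2) = 1 := by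
      rw [← Real.exp_add]; simp
    nlinarith [this]
  have hzp : 0 < z * Real.exp (z / 2) := by positivity
  have := mul_self_lt_mul_self (le_of_lt hzp) h2
  have hz2 : Real.exp (z / 2) * Real.exp (z / 2) = Real.exp z := by
    rw [← Real.exp_add]; ring_nf
  nlinarith

private lemma h_eq {z : ℝ} (hz : 0 < z) :
    1 / z - 1 / (Real.exp z - 1) = (Real.exp z - 1 - z) / (z * (Real.exp z - 1)) := by
  have h1 : (0:ℝ) < Real.exp z - 1 := by have := q_pos hz; linarith
  field_simp

private lemma h_pos {z : ℝ} (hz : 0 < z) : 0 < 1 / z - 1 / (Real.exp z - 1) := by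
  rw [h_eq hz]
  have h1 : (0:ℝ) < Real.exp z - 1 := by have := q_pos hz; linarith
  exact div_pos (q_pos hz) (by positivity)

private lemma h_hasDeriv {z : ℝ} (hz : 0 < z) :
    HasDerivAt (fun z => 1 / z - 1 / (Real.exp z - 1))
      (-(z ^ 2)⁻¹ - -(Real.exp z / (Real.exp z - 1) ^ 2)) z := by
  have h1 : (0:ℝ) < Real.exp z - 1 := by have := q_pos hz; linarith
  have d1 : HasDerivAt (fun z : ℝ => 1 / z) (-(z ^ 2)⁻¹) z := by
    simpa using (hasDerivAt_inv (ne_of_gt hz))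
  have d2 : HasDerivAt (fun z : ℝ => Real.exp z - 1) (Real.exp z) z :=
    (Real.hasDerivAt_exp z).sub_const 1
  have d3 : HasDerivAt (fun z : ℝ => 1 / (Real.exp z - 1))
      (-(Real.exp z / (Real.exp z - 1) ^ 2)) z := by
    have : HasDerivAt (fun y : ℝ => (Real.exp y - 1)⁻¹)
        (-Real.exp z / (Real.exp z - 1) ^ 2) z := d2.inv (ne_of_gt h1)
    simpa [one_div, div_eq_mul_inv, neg_div] using this
  exact d1.sub d3

private lemma h_strictAnti : StrictAntiOn (fun z => 1 / z - 1 / (Real.exp z - 1)) (Set.Ioi 0) := by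
  apply strictAntiOn_of_deriv_neg (convex_Ioi 0)
  · apply ContinuousOn.sub
    · exact continuousOn_const.div continuousOn_id fun x hx => ne_of_gt hx
    · apply continuousOn_const.div (Real.continuous_exp.continuousOn.sub continuousOn_const)
      intro x hx
      have := q_pos (Set.mem_Ioi.mp hx)
      have hx' := Set.mem_Ioi.mp hx
      show Real.exp x - 1 ≠ 0
      nlinarith
  · intro x hx
    rw [interior_Ioi] at hx
    have hx' := Set.mem_Ioi.mp hx
    rw [(h_hasDeriv hx').deriv]
    have h1 : (0:ℝ) < Real.exp x - 1 := by have := q_pos hx'; linarith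
    have key := key_ineq hx'
    have : Real.exp x / (Real.exp x - 1) ^ 2 < (x ^ 2)⁻¹ := by
      rw [div_lt_iff₀ (by positivity), inv_mul_eq_div, lt_div_iff₀ (by positivity)]
      nlinarith
    linarith

private lemma Q_eq_inv_h {z : ℝ} (hz : 0 < z) :
    z * (Real.exp z - 1) / (Real.exp z - 1 - z) = (1 / z - 1 / (Real.exp z - 1))⁻¹ := by
  rw [h_eq hz]
  have h1 : (0:ℝ) < Real.exp z - 1 := by have := q_pos hz; linarith
  have h2 := q_pos hz
  field_simp

/-- The function Q(z) = z q'(z)/q(z), where q(z) = e^z − 1 − z, is strictly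
increasing on (0,∞), with limit 2 as z → 0⁺ and limit ∞ as z → ∞. -/
theorem Q_strictMono_and_limits :
    let Q : ℝ → ℝ := fun z => z * (Real.exp z - 1) / (Real.exp z - 1 - z)
    StrictMonoOn Q (Set.Ioi 0) ∧ Tendsto Q (𝓝[>] 0) (𝓝 2) ∧ Tendsto Q atTop atTop := by
  intro Q
  refine ⟨?_, ?_, ?_⟩
  · -- strict mono
    intro x hx y hy hxy
    have hx' := Set.mem_Ioi.mp hx
    have hy' := Set.mem_Ioi.mp hy
    show Q x < Q y
    simp only [Q, Q_eq_inv_h hx', Q_eq_inv_h hy']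
    have hlt := h_strictAnti hx hy hxy
    have hpy := h_pos hy'
    exact inv_strictAnti₀ hpy hlt
  · -- limit 2 at 0+
    have hg : ∀ c : ℝ, Tendsto (fun z : ℝ => c * z) (𝓝[>] (0:ℝ)) (𝓝 0) := by
      intro c
      have : Tendsto (fun z : ℝ => c * z) (𝓝 (0:ℝ)) (𝓝 (c * 0)) :=
        (tendsto_id.const_mul c)
      simpa using this.mono_left nhdsWithin_le_nhds
    have hnum : Tendsto (fun z : ℝ => (Real.exp z - 1) / z) (𝓝[>] 0) (𝓝 1) := by
      rw [tendsto_iff_dist_tendsto_zero]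
      apply squeeze_zero' (Filter.Eventually.of_forall fun z => dist_nonneg)
        _ (hg (3/4))
      filter_upwards [Ioo_mem_nhdsGT_of_mem (by constructor <;> norm_num :
        (0:ℝ) ∈ Set.Ico (0:ℝ) 1)] with z hz
      obtain ⟨hz0, hz1⟩ := hz
      have habs : |z| ≤ 1 := by rw [abs_of_pos hz0]; linarith
      have hb := Real.exp_bound habs (by norm_num : 0 < 2)
      norm_num [Finset.sum_range_succ, Nat.factorial] at hb
      rw [Real.dist_eq]
      have heq : (Real.exp z - 1) / z - 1 = (Real.exp z - (1 + z)) / z := by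
        field_simp
        ring
      rw [heq, abs_div, abs_of_pos hz0, div_le_iff₀ hz0]
      have : |z| ^ 2 = z ^ 2 := by rw [sq_abs]
      nlinarith [hb]
    have hden : Tendsto (fun z : ℝ => (Real.exp z - 1 - z) / z ^ 2) (𝓝[>] 0)
        (𝓝 (1/2)) := by
      rw [tendsto_iff_dist_tendsto_zero]
      apply squeeze_zero' (Filter.Eventually.of_forall fun z => dist_nonneg)
        _ (hg (2/9))
      filter_upwards [Ioo_mem_nhdsGT_of_mem (by constructor <;> norm_num :
        (0:ℝ) ∈ Set.Ico (0:ℝ) 1)] with z hz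
      obtain ⟨hz0, hz1⟩ := hz
      have habs : |z| ≤ 1 := by rw [abs_of_pos hz0]; linarith
      have hb := Real.exp_bound habs (by norm_num : 0 < 3)
      norm_num [Finset.sum_range_succ, Nat.factorial] at hb
      rw [Real.dist_eq]
      have hz2 : (0:ℝ) < z ^ 2 := by positivity
      have heq : (Real.exp z - 1 - z) / z ^ 2 - 1/2 =
          (Real.exp z - (1 + z + z ^ 2 / 2)) / z ^ 2 := by
        field_simp
        ring
      rw [heq, abs_div, abs_of_pos hz2, div_le_iff₀ hz2]
      have h3 : |z| ^ 3 = z ^ 3 := by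
        rw [abs_of_pos hz0]
      nlinarith [hb]
    have hQ := hnum.div hden (by norm_num)
    rw [show (1:ℝ) / (1/2) = 2 by norm_num] at hQ
    apply hQ.congr'
    filter_upwards [self_mem_nhdsWithin] with z hz
    have hz0 := Set.mem_Ioi.mp hz
    have hq := q_pos hz0
    show _ = Q z
    simp only [Q, Pi.div_apply]
    field_simp
  · -- limit at infinity
    apply tendsto_atTop_mono' atTop _ tendsto_id
    filter_upwards [eventually_gt_atTop 0] with z hz
    have hq := q_pos hz
    show (id z : ℝ) ≤ Q z
    have : Q z = z + z ^ 2 / (Real.exp z - 1 - z) := by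
      show z * (Real.exp z - 1) / (Real.exp z - 1 - z) = _
      field_simp
      ring
    rw [this]
    have : 0 < z ^ 2 / (Real.exp z - 1 - z) := by positivity
    simp only [id]
    linarith
end
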